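/- Let A ∈ ℝ^{m×n} (m ≤ n) with largest singular value σ₁ and smallest singular value σ_m, let ε > 0, and let 0 < λ ≤ σ_m² + ε. Then the spectral norm of the symmetric matrix (I − λ(AᵀA + εI)⁻¹)AᵀA equals σ₁² − λσ₁²/(σ₁² + ε). In particular, every eigenvalue of this matrix is nonnegative. -/

import Mathlib

open Matrix

/-- The Euclidean (ℓ₂) norm of a vector in ℝ^d. -/
noncomputable def l2 {d : ℕ} (v : Fin d → ℝ) : ℝ := Real.sqrt (∑ i, v i ^ 2)

/-- The spectral norm (operator 2-norm, i.e. the largest singular value) of a matrix. -/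
noncomputable def specNorm {a b : ℕ} (M : Matrix (Fin a) (Fin b) ℝ) : ℝ :=
  sSup {t : ℝ | ∃ v : Fin b → ℝ, l2 v = 1 ∧ t = l2 (M *ᵥ v)}

lemma mem_spectrum_iff_eigen {k : ℕ} (M : Matrix (Fin k) (Fin k) ℝ) (μ : ℝ) :
    μ ∈ spectrum ℝ M ↔ ∃ v : Fin k → ℝ, v ≠ 0 ∧ M *ᵥ v = μ • v := by
  rw [← AlgEquiv.spectrum_eq (Matrix.toLinAlgEquiv' (R := ℝ) (n := Fin k)),
    ← Module.End.hasEigenvalue_iff_mem_spectrum]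
  constructor
  · intro h
    obtain ⟨v, hv⟩ := h.exists_hasEigenvector
    refine ⟨v, hv.2, ?_⟩
    have := hv.apply_eq_smul
    simpa [Matrix.toLinAlgEquiv'_apply, Matrix.toLin'_apply] using this
  · rintro ⟨v, hv0, hv⟩
    apply Module.End.hasEigenvalue_of_hasEigenvector (x := v)
    refine ⟨Module.End.mem_eigenspace_iff.mpr ?_, hv0⟩
    simpa [Matrix.toLinAlgEquiv'_apply, Matrix.toLin'_apply] using hv

lemma spectrum_swap {p q : ℕ} (X : Matrix (Fin p) (Fin q) ℝ) (Y : Matrix (Fin q) (Fin p) ℝ)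
    {μ : ℝ} (hμ : μ ≠ 0) (h : μ ∈ spectrum ℝ (X * Y)) : μ ∈ spectrum ℝ (Y * X) := by
  rw [mem_spectrum_iff_eigen] at h ⊢
  obtain ⟨v, hv0, hv⟩ := h
  have hXYv : X *ᵥ (Y *ᵥ v) = μ • v := by rw [mulVec_mulVec]; exact hv
  refine ⟨Y *ᵥ v, ?_, ?_⟩
  · intro hzero
    rw [hzero, mulVec_zero] at hXYv
    rcases smul_eq_zero.mp hXYv.symm with h | h
    · exact hμ h
    · exact hv0 h
  · rw [← mulVec_mulVec, hXYv, mulVec_smul]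

lemma f_bounds {ε lam t s : ℝ} (hε : 0 < ε) (hlam0 : 0 < lam) (hlam : lam ≤ t + ε)
    (ht : 0 ≤ t) (hts : t ≤ s) :
    0 ≤ (1 - lam * (t + ε)⁻¹) * t ∧
      (1 - lam * (t + ε)⁻¹) * t ≤ (1 - lam * (s + ε)⁻¹) * s := by
  have htε : 0 < t + ε := by linarith
  have hsε : 0 < s + ε := by linarith
  have hu : (t + ε) * (t + ε)⁻¹ = 1 := mul_inv_cancel₀ htε.ne'
  have hw : (s + ε) * (s + ε)⁻¹ = 1 := mul_inv_cancel₀ hsε.ne'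
  have hu0 : 0 ≤ (t + ε)⁻¹ := by positivity
  have hw0 : 0 ≤ (s + ε)⁻¹ := by positivity
  constructor
  · have h1 : lam * (t + ε)⁻¹ ≤ 1 := by
      calc lam * (t + ε)⁻¹ ≤ (t + ε) * (t + ε)⁻¹ := mul_le_mul_of_nonneg_right hlam hu0
        _ = 1 := hu
    nlinarith
  · have key : lam * ε * ((t + ε)⁻¹ * (s + ε)⁻¹) ≤ 1 := by
      calc lam * ε * ((t + ε)⁻¹ * (s + ε)⁻¹)
          ≤ (t + ε) * (s + ε) * ((t + ε)⁻¹ * (s + ε)⁻¹) := by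
            apply mul_le_mul_of_nonneg_right _ (mul_nonneg hu0 hw0)
            exact mul_le_mul hlam (by linarith) hε.le htε.le
        _ = ((t + ε) * (t + ε)⁻¹) * ((s + ε) * (s + ε)⁻¹) := by ring
        _ = 1 := by rw [hu, hw, one_mul]
    have hid : (1 - lam * (s + ε)⁻¹) * s - (1 - lam * (t + ε)⁻¹) * t
        = (s - t) * (1 - lam * ε * ((t + ε)⁻¹ * (s + ε)⁻¹)) := by
      field_simp
      ring
    nlinarith [sub_nonneg.mpr hts]

lemma l2_nonneg {d : ℕ} (v : Fin d → ℝ) : 0 ≤ l2 v := Real.sqrt_nonneg _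

lemma l2_smul {d : ℕ} (c : ℝ) (v : Fin d → ℝ) : l2 (c • v) = |c| * l2 v := by
  unfold l2
  rw [← Real.sqrt_sq_eq_abs, ← Real.sqrt_mul (sq_nonneg c), Finset.mul_sum]
  congr 1
  refine Finset.sum_congr rfl fun i _ => ?_
  simp [mul_pow]

lemma l2_eq_norm {d : ℕ} (x : EuclideanSpace ℝ (Fin d)) : l2 ⇑x = ‖x‖ := by
  rw [EuclideanSpace.norm_eq]
  unfold l2
  congr 1
  exact Finset.sum_congr rfl fun i _ => by rw [Real.norm_eq_abs, sq_abs]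

lemma l2_mulVec_unitary {d : ℕ} (U : Matrix (Fin d) (Fin d) ℝ) (hU : Uᵀ * U = 1)
    (v : Fin d → ℝ) : l2 (U *ᵥ v) = l2 v := by
  unfold l2
  congr 1
  have h1 : ∀ w : Fin d → ℝ, ∑ i, w i ^ 2 = w ⬝ᵥ w := by
    intro w; simp [dotProduct, sq]
  rw [h1, h1]
  calc (U *ᵥ v) ⬝ᵥ (U *ᵥ v) = ((U *ᵥ v) ᵥ* U) ⬝ᵥ v := dotProduct_mulVec _ _ _
    _ = ((Uᵀ * U) *ᵥ v) ⬝ᵥ v := by rw [← mulVec_transpose, mulVec_mulVec]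
    _ = v ⬝ᵥ v := by rw [hU, one_mulVec]

lemma l2_eq_one_iff {d : ℕ} (v : Fin d → ℝ) : l2 v = 1 ↔ ∑ i, v i ^ 2 = 1 := by
  unfold l2
  constructor
  · intro h
    have := congrArg (· ^ 2) h
    simpa [Real.sq_sqrt (Finset.sum_nonneg fun i _ => sq_nonneg (v i))] using this
  · intro h; rw [h, Real.sqrt_one]

/-- specNorm of a hermitian matrix whose spectrum has greatest absolute value `c ≥ 0`. -/
lemma specNorm_hermitian {k : ℕ} (hk : 0 < k) {M : Matrix (Fin k) (Fin k) ℝ}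
    (hM : M.IsHermitian) {c : ℝ} (hc : 0 ≤ c) (hmem : c ∈ spectrum ℝ M)
    (hmax : ∀ μ ∈ spectrum ℝ M, |μ| ≤ c) : specNorm M = c := by
  have hspec := hM.spectrum_real_eq_range_eigenvalues
  apply IsGreatest.csSup_eq
  constructor
  · -- c is attained: eigenvector of eigenvalue c
    rw [hspec] at hmem
    obtain ⟨i, hi⟩ := hmem
    have hunit : l2 ⇑(hM.eigenvectorBasis i) = 1 := by
      rw [l2_eq_norm]
      exact hM.eigenvectorBasis.orthonormal.1 i
    refine ⟨⇑(hM.eigenvectorBasis i), hunit, ?_⟩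
    have hmv : M *ᵥ ⇑(hM.eigenvectorBasis i) = hM.eigenvalues i • ⇑(hM.eigenvectorBasis i) :=
      hM.mulVec_eigenvectorBasis i
    rw [hmv, hi, l2_smul, abs_of_nonneg hc, hunit, mul_one]
  · -- upper bound
    rintro t ⟨v, hv1, rfl⟩
    set U : Matrix (Fin k) (Fin k) ℝ := (hM.eigenvectorUnitary : Matrix (Fin k) (Fin k) ℝ) with hUdef
    have hU1 : Uᵀ * U = 1 := by
      have := (Matrix.mem_unitaryGroup_iff'.mp hM.eigenvectorUnitary.2)
      simpa [hUdef, star_eq_conjTranspose, conjTranspose_eq_transpose_of_trivial] using this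
    have hU2 : U * Uᵀ = 1 := by
      have := (Matrix.mem_unitaryGroup_iff.mp hM.eigenvectorUnitary.2)
      simpa [hUdef, star_eq_conjTranspose, conjTranspose_eq_transpose_of_trivial] using this
    have hdecomp : M = U * Matrix.diagonal hM.eigenvalues * Uᵀ := by
      have := hM.spectral_theorem
      simpa [hUdef, star_eq_conjTranspose, conjTranspose_eq_transpose_of_trivial,
        Function.comp_def] using this
    have hMv : M *ᵥ v = U *ᵥ (Matrix.diagonal hM.eigenvalues *ᵥ (Uᵀ *ᵥ v)) := by
      conv_lhs => rw [hdecomp]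
      rw [← mulVec_mulVec, ← mulVec_mulVec]
    set w : Fin k → ℝ := Uᵀ *ᵥ v with hw
    have hw1 : l2 w = 1 := by
      rw [hw, ← hv1]
      apply l2_mulVec_unitary
      simpa using hU2
    rw [hMv, l2_mulVec_unitary U hU1]
    have hbound : ∀ i, (hM.eigenvalues i) ^ 2 ≤ c ^ 2 := by
      intro i
      have h1 : hM.eigenvalues i ∈ spectrum ℝ M := hM.eigenvalues_mem_spectrum_real i
      have := hmax _ h1
      nlinarith [abs_nonneg (hM.eigenvalues i), sq_abs (hM.eigenvalues i)]
    unfold l2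
    rw [show c = Real.sqrt (c ^ 2) by rw [Real.sqrt_sq hc]]
    apply Real.sqrt_le_sqrt
    calc ∑ i, (Matrix.diagonal hM.eigenvalues *ᵥ w) i ^ 2
        = ∑ i, (hM.eigenvalues i) ^ 2 * w i ^ 2 := by
          refine Finset.sum_congr rfl fun i _ => ?_
          rw [mulVec_diagonal]; ring
      _ ≤ ∑ i, c ^ 2 * w i ^ 2 := by
          apply Finset.sum_le_sum
          intro i _
          exact mul_le_mul_of_nonneg_right (hbound i) (sq_nonneg _)
      _ = c ^ 2 := by rw [← Finset.mul_sum, (l2_eq_one_iff w).mp hw1, mul_one]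

/-- For `0 < λ ≤ σ_m² + ε`, the spectral norm of the symmetric matrix
`(I - λ(AᵀA + εI)⁻¹)AᵀA` equals `σ₁² - λσ₁²/(σ₁² + ε)`, and every eigenvalue of this
matrix is nonnegative. Here `σ₁², σ_m²` are the largest and smallest eigenvalues of `AAᵀ`. -/
theorem stmt6 {m n : ℕ} (hmn : m ≤ n) (A : Matrix (Fin m) (Fin n) ℝ)
    (σ1 σm ε lam : ℝ) (hσ1 : 0 ≤ σ1) (hσm : 0 ≤ σm)
    (hσ1mem : σ1 ^ 2 ∈ spectrum ℝ (A * Aᵀ))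
    (hσ1max : ∀ μ ∈ spectrum ℝ (A * Aᵀ), μ ≤ σ1 ^ 2)
    (hσmmem : σm ^ 2 ∈ spectrum ℝ (A * Aᵀ))
    (hσmmin : ∀ μ ∈ spectrum ℝ (A * Aᵀ), σm ^ 2 ≤ μ)
    (hε : 0 < ε) (hlam0 : 0 < lam) (hlam : lam ≤ σm ^ 2 + ε) :
    specNorm ((1 - lam • (Aᵀ * A + ε • 1)⁻¹) * (Aᵀ * A)) =
        σ1 ^ 2 - lam * σ1 ^ 2 / (σ1 ^ 2 + ε) ∧
      ∀ μ ∈ spectrum ℝ ((1 - lam • (Aᵀ * A + ε • 1)⁻¹) * (Aᵀ * A)), 0 ≤ μ := by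
  classical
  have hm : 0 < m := by
    rcases Nat.eq_zero_or_pos m with hm0 | hm
    · subst hm0
      exact absurd (isUnit_of_subsingleton _) (spectrum.mem_iff.mp hσ1mem)
    · exact hm
  have hn : 0 < n := lt_of_lt_of_le hm hmn
  haveI : Nonempty (Fin n) := ⟨⟨0, hn⟩⟩
  set B : Matrix (Fin n) (Fin n) ℝ := Aᵀ * A with hBdef
  have hBH : B.IsHermitian := by
    have := isHermitian_conjTranspose_mul_self A
    rwa [conjTranspose_eq_transpose_of_trivial] at this
  have hBsa : IsSelfAdjoint B := hBH
  have hBpsd : B.PosSemidef := by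
    have := posSemidef_conjTranspose_mul_self A
    rwa [conjTranspose_eq_transpose_of_trivial] at this
  have hspecB_nonneg : ∀ t ∈ spectrum ℝ B, 0 ≤ t := by
    intro t ht
    rw [hBH.spectrum_real_eq_range_eigenvalues] at ht
    obtain ⟨i, rfl⟩ := ht
    exact hBpsd.eigenvalues_nonneg i
  -- σ1² ∈ spectrum B
  have hs_mem : σ1 ^ 2 ∈ spectrum ℝ B := by
    rcases eq_or_ne (σ1 ^ 2) 0 with h0 | hne
    · -- A = 0 case
      have hAAH : (A * Aᵀ).IsHermitian := by
        have := isHermitian_mul_conjTranspose_self A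
        rwa [conjTranspose_eq_transpose_of_trivial] at this
      have heig0 : ∀ i, hAAH.eigenvalues i = 0 := fun i =>
        le_antisymm (h0 ▸ hσ1max _ (hAAH.eigenvalues_mem_spectrum_real i))
          (le_trans (sq_nonneg σm) (hσmmin _ (hAAH.eigenvalues_mem_spectrum_real i)))
      have hAAT0 : A * Aᵀ = 0 := by
        have h := hAAH.spectral_theorem
        rw [show (RCLike.ofReal ∘ hAAH.eigenvalues : Fin m → ℝ) = 0 from
          funext fun i => by simp [heig0 i]] at h
        rw [show (0 : Fin m → ℝ) = (fun _ => 0) from rfl, diagonal_zero, map_zero] at h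
        exact h
      have hA0 : A = 0 := by
        rw [← Matrix.self_mul_conjTranspose_eq_zero (A := A),
          conjTranspose_eq_transpose_of_trivial]
        exact hAAT0
      have hB0 : B = 0 := by rw [hBdef, hA0]; simp
      rw [h0, hB0, spectrum.zero_mem_iff]
      intro hu
      rw [isUnit_zero_iff] at hu
      exact one_ne_zero (congrFun (congrFun hu.symm ⟨0, hn⟩) ⟨0, hn⟩)
    · exact spectrum_swap A Aᵀ hne hσ1mem
  -- spectrum facts
  have hswap : ∀ t ∈ spectrum ℝ B, t ≠ 0 → t ∈ spectrum ℝ (A * Aᵀ) := fun t ht hne =>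
    spectrum_swap Aᵀ A hne ht
  -- the function
  set f : ℝ → ℝ := fun t => (1 - lam * (t + ε)⁻¹) * t with hfdef
  have hne0 : ∀ t ∈ spectrum ℝ B, t + ε ≠ 0 := fun t ht =>
    (add_pos_of_nonneg_of_pos (hspecB_nonneg t ht) hε).ne'
  have hg : ContinuousOn (fun t : ℝ => (t + ε)⁻¹) (spectrum ℝ B) :=
    ContinuousOn.inv₀ ((continuous_id.add continuous_const).continuousOn) hne0
  have hg2 : ContinuousOn (fun t : ℝ => 1 - lam * (t + ε)⁻¹) (spectrum ℝ B) :=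
    continuousOn_const.sub (continuousOn_const.mul hg)
  have hf : ContinuousOn f (spectrum ℝ B) := hg2.mul continuousOn_id
  -- cfc identification
  have hS : B + ε • 1 = cfc (fun t : ℝ => t + ε) B := by
    rw [cfc_add_const ε (fun t : ℝ => t) B continuousOn_id hBsa, cfc_id' ℝ B hBsa,
      Algebra.algebraMap_eq_smul_one]
  have hg1 : cfc (fun t : ℝ => t + ε) B * cfc (fun t : ℝ => (t + ε)⁻¹) B = 1 := by
    rw [← cfc_mul _ _ B (show ContinuousOn (fun t : ℝ => t + ε) (spectrum ℝ B) from (continuous_id.add continuous_const).continuousOn) hg]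
    calc cfc (fun t : ℝ => (t + ε) * (t + ε)⁻¹) B
        = cfc (fun _ : ℝ => (1 : ℝ)) B := cfc_congr fun t ht => mul_inv_cancel₀ (hne0 t ht)
      _ = 1 := cfc_const_one ℝ B
  have hSinv : (B + ε • 1)⁻¹ = cfc (fun t : ℝ => (t + ε)⁻¹) B := by
    apply inv_eq_right_inv
    rw [hS]; exact hg1
  have hMcfc : (1 - lam • (B + ε • 1)⁻¹) * B = cfc f B := by
    have h1 : cfc f B = cfc (fun t : ℝ => 1 - lam * (t + ε)⁻¹) B * cfc (fun t : ℝ => t) B := by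
      rw [← cfc_mul _ _ B hg2 (show ContinuousOn (fun t : ℝ => t) (spectrum ℝ B) from continuousOn_id)]
    rw [h1, cfc_id' ℝ B hBsa]
    congr 1
    rw [cfc_sub (fun _ : ℝ => (1 : ℝ)) (fun t : ℝ => lam * (t + ε)⁻¹) B continuousOn_const
      (continuousOn_const.mul hg), cfc_const_one ℝ B, cfc_const_mul lam _ B hg, hSinv]
  have hMH : ((1 - lam • (B + ε • 1)⁻¹) * B).IsHermitian := by
    rw [hMcfc]
    exact cfc_predicate f B
  have hspecM : spectrum ℝ ((1 - lam • (B + ε • 1)⁻¹) * B) = f '' spectrum ℝ B := by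
    rw [hMcfc]
    exact cfc_map_spectrum f B hBsa hf
  -- bounds
  have hsm : σm ^ 2 ≤ σ1 ^ 2 := hσmmin _ hσ1mem
  have key : ∀ t ∈ spectrum ℝ B, 0 ≤ f t ∧ f t ≤ f (σ1 ^ 2) := by
    intro t ht
    have ht0 := hspecB_nonneg t ht
    have hfs : 0 ≤ f (σ1 ^ 2) :=
      (f_bounds hε hlam0 (by linarith) (sq_nonneg σ1) le_rfl).1
    rcases eq_or_ne t 0 with rfl | htne
    · constructor
      · simp [hfdef]
      · simpa [hfdef] using hfs
    · have htAAT := hswap t ht htne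
      have h1 : σm ^ 2 ≤ t := hσmmin _ htAAT
      have h2 : t ≤ σ1 ^ 2 := hσ1max _ htAAT
      exact f_bounds hε hlam0 (by linarith) ht0 h2
  have hcs : f (σ1 ^ 2) = σ1 ^ 2 - lam * σ1 ^ 2 / (σ1 ^ 2 + ε) := by
    have hpos : (0:ℝ) < σ1 ^ 2 + ε := by positivity
    rw [hfdef]
    field_simp
  constructor
  · rw [← hcs]
    refine specNorm_hermitian hn hMH ?_ ?_ ?_
    · exact (f_bounds hε hlam0 (by linarith) (sq_nonneg σ1) le_rfl).1
    · rw [hspecM]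
      exact ⟨σ1 ^ 2, hs_mem, rfl⟩
    · intro μ hμ
      rw [hspecM] at hμ
      obtain ⟨t, ht, rfl⟩ := hμ
      rw [abs_of_nonneg (key t ht).1]
      exact (key t ht).2
  · intro μ hμ
    rw [hspecM] at hμ
    obtain ⟨t, ht, rfl⟩ := hμ
    exact (key t ht).1
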